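/- Let 2 ≤ k ≤ d ≤ d' be integers with k dividing d. Then for every integer i with 1 ≤ i ≤ k−1 and d'−i ≥ k, there exists a d(d'−i)-number USV1Bk in M_{d×d'}; moreover one can be chosen consisting of matrices supported on the first d'−i columns. Equivalently, there is a d(d'−i)-number special unextendible entangled basis with Schmidt number k (SUEBk) in ℂ^d ⊗ ℂ^{d'}. -/
import Mathlib


open Matrix

/-- `A` is a `k`-singular-value-1 matrix. -/
def IsSV1 {m n : Type*} [Fintype m] [Fintype n] (k : ℕ) (A : Matrix m n ℂ) : Prop :=
  (Aᴴ * A) * (Aᴴ * A) = Aᴴ * A ∧ A.rank = k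



lemma gsum (k : ℕ) (x : ℂ) (hx : x ^ k = 1) :
    ∑ s ∈ Finset.range k, x ^ s = if x = 1 then (k : ℂ) else 0 := by
  split_ifs with h
  · simp [h]
  · have := geom_sum_eq h k
    rw [this, hx]
    simp

lemma trace_inner {α β : Type*} [Fintype α] [Fintype β] (X Y : Matrix α β ℂ) :
    (Xᴴ * Y).trace = ∑ r, ∑ c, star (X r c) * Y r c := by
  simp only [Matrix.trace, Matrix.diag, Matrix.mul_apply, Matrix.conjTranspose_apply]
  exact Finset.sum_comm

lemma col_sum {d' : ℕ} (v : ℕ) (hv : v < d') (f : Fin d' → ℂ) :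
    ∑ c : Fin d', (if (c : ℕ) = v then f c else 0) = f ⟨v, hv⟩ := by
  rw [Finset.sum_eq_single (⟨v, hv⟩ : Fin d')]
  · simp
  · intro c _ hc
    rw [if_neg]
    intro h
    exact hc (Fin.ext h)
  · simp

lemma div_eq_iff_mem_Ico {k q r : ℕ} (hk : 0 < k) : r / k = q ↔ q * k ≤ r ∧ r < q * k + k := by
  constructor
  · rintro rfl
    refine ⟨Nat.div_mul_le_self r k, ?_⟩
    have h1 : r % k < k := Nat.mod_lt r hk
    have h2 : r / k * k + r % k = r := Nat.div_add_mod' r k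
    omega
  · rintro ⟨h1, h2⟩
    exact Nat.div_eq_of_lt_le h1 (by rw [Nat.succ_mul]; omega)

lemma sum_rows' (d k q : ℕ) (hk : 0 < k) (hq : (q + 1) * k ≤ d) (H : ℕ → ℂ) :
    ∑ r ∈ Finset.range d, (if r / k = q then H r else 0)
      = ∑ s ∈ Finset.range k, H (q * k + s) := by
  rw [← Finset.sum_filter]
  have hset : (Finset.range d).filter (fun r => r / k = q) = Finset.Ico (q * k) (q * k + k) := by
    ext r
    simp only [Finset.mem_filter, Finset.mem_range, Finset.mem_Ico, div_eq_iff_mem_Ico hk]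
    constructor
    · rintro ⟨_, h2, h3⟩; exact ⟨h2, h3⟩
    · rintro ⟨h2, h3⟩
      have hmul : (q + 1) * k = q * k + k := Nat.succ_mul q k
      exact ⟨by omega, h2, h3⟩
  rw [hset, Finset.sum_Ico_eq_sum_range]
  simp only [Nat.add_sub_cancel_left]

noncomputable def zetaC (k : ℕ) : ℂ := Complex.exp (2 * Real.pi * Complex.I / k)

lemma star_zetaC (k : ℕ) : star (zetaC k) = (zetaC k)⁻¹ := by
  rw [zetaC, Complex.star_def, ← Complex.exp_conj, ← Complex.exp_neg]
  congr 1
  simp only [map_div₀, _root_.map_mul, Complex.conj_I, Complex.conj_ofReal, map_ofNat, map_natCast]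
  ring

lemma zetaC_ne_zero (k : ℕ) : zetaC k ≠ 0 := Complex.exp_ne_zero _

lemma gsum' (k : ℕ) (x : ℂ) (hx : x ^ k = 1) :
    ∑ s ∈ Finset.range k, x ^ s = if x = 1 then (k : ℂ) else 0 := by
  split_ifs with h
  · simp [h]
  · rw [geom_sum_eq h k, hx]
    simp

lemma key_sum (k a b : ℕ) (hk0 : 0 < k) (ha : a < k) (hb : b < k) :
    ∑ s ∈ Finset.range k, star ((zetaC k) ^ (s * a)) * (zetaC k) ^ (s * b)
      = if a = b then (k : ℂ) else 0 := by
  have prim := Complex.isPrimitiveRoot_exp k hk0.ne'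
  have hz1 : (zetaC k) ^ k = 1 := prim.pow_eq_one
  have hterm : ∀ s, star ((zetaC k) ^ (s * a)) * (zetaC k) ^ (s * b)
      = (((zetaC k)⁻¹ ^ a) * (zetaC k) ^ b) ^ s := by
    intro s
    rw [mul_pow, ← pow_mul, ← pow_mul, star_pow, star_zetaC, Nat.mul_comm a s,
      Nat.mul_comm b s]
  simp only [hterm]
  have hxk : (((zetaC k)⁻¹ ^ a) * (zetaC k) ^ b) ^ k = 1 := by
    rw [mul_pow, ← pow_mul, ← pow_mul, Nat.mul_comm a k, Nat.mul_comm b k,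
      pow_mul, pow_mul, inv_pow, hz1]
    simp
  rw [gsum' k _ hxk]
  have hx1 : (((zetaC k)⁻¹ ^ a) * (zetaC k) ^ b) = 1 ↔ a = b := by
    rw [inv_pow, inv_mul_eq_one₀ (pow_ne_zero _ (zetaC_ne_zero k))]
    constructor
    · intro h
      exact prim.pow_inj ha hb h
    · rintro rfl; rfl
  rw [if_congr hx1 rfl rfl]


noncomputable def Amat (k d d' e mq mt mb : ℕ) : Matrix (Fin d) (Fin d') ℂ :=
  Matrix.of fun r c =>
    if (r : ℕ) / k = mq ∧ (c : ℕ) = (mb + (r : ℕ) % k) % e then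
      zetaC k ^ (((r : ℕ) % k) * mt) else 0

lemma Amat_apply (k d d' e mq mt mb : ℕ) (r : Fin d) (c : Fin d') :
    Amat k d d' e mq mt mb r c =
      if (r : ℕ) / k = mq ∧ (c : ℕ) = (mb + (r : ℕ) % k) % e then
        zetaC k ^ (((r : ℕ) % k) * mt) else 0 := rfl

lemma Amat_trace (k d d' e mq mt mb : ℕ) (hk0 : 0 < k) (hd0 : 0 < d) (hd'0 : 0 < d')
    (he0 : 0 < e) (hed : e ≤ d') (hq : (mq + 1) * k ≤ d)
    (B : Matrix (Fin d) (Fin d') ℂ) :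
    ((Amat k d d' e mq mt mb)ᴴ * B).trace
      = ∑ s ∈ Finset.range k, star (zetaC k ^ (s * mt)) *
          B ⟨(mq * k + s) % d, Nat.mod_lt _ hd0⟩ ⟨(mb + s) % e % d', Nat.mod_lt _ hd'0⟩ := by
  rw [trace_inner]
  have step1 : ∀ r : Fin d, ∑ c : Fin d', star (Amat k d d' e mq mt mb r c) * B r c
      = (if (r : ℕ) / k = mq then
          star (zetaC k ^ (((r : ℕ) % k) * mt)) *
            B ⟨(r : ℕ) % d, Nat.mod_lt _ hd0⟩
              ⟨(mb + (r : ℕ) % k) % e % d', Nat.mod_lt _ hd'0⟩ else 0) := by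
    intro r
    have hrr : (⟨(r : ℕ) % d, Nat.mod_lt _ hd0⟩ : Fin d) = r :=
      Fin.ext (Nat.mod_eq_of_lt r.isLt)
    by_cases hr : (r : ℕ) / k = mq
    · rw [if_pos hr, hrr]
      have hvlt : (mb + (r : ℕ) % k) % e < d' := lt_of_lt_of_le (Nat.mod_lt _ he0) hed
      have hcc : (⟨(mb + (r : ℕ) % k) % e % d', Nat.mod_lt _ hd'0⟩ : Fin d')
          = ⟨(mb + (r : ℕ) % k) % e, hvlt⟩ := Fin.ext (Nat.mod_eq_of_lt hvlt)
      rw [hcc]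
      have := col_sum ((mb + (r : ℕ) % k) % e) hvlt
        (fun c => star (zetaC k ^ (((r : ℕ) % k) * mt)) * B r c)
      rw [← this]
      apply Finset.sum_congr rfl
      intro c _
      simp only [Amat_apply, hr, true_and, apply_ite (star : ℂ → ℂ), star_zero, ite_mul,
        zero_mul]
    · rw [if_neg hr]
      apply Finset.sum_eq_zero
      intro c _
      simp only [Amat_apply]
      rw [if_neg (by tauto), star_zero, zero_mul]
  rw [Finset.sum_congr rfl (fun r _ => step1 r)]
  rw [Fin.sum_univ_eq_sum_range (fun n => if n / k = mq then
      star (zetaC k ^ ((n % k) * mt)) *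
        B ⟨n % d, Nat.mod_lt _ hd0⟩ ⟨(mb + n % k) % e % d', Nat.mod_lt _ hd'0⟩ else 0) d]
  rw [sum_rows' d k mq hk0 hq]
  apply Finset.sum_congr rfl
  intro s hs
  simp only [Finset.mem_range] at hs
  have hmod : (mq * k + s) % k = s := by
    rw [Nat.add_comm, Nat.add_mul_mod_self_right, Nat.mod_eq_of_lt hs]
  rw [hmod]
open scoped Classical

lemma mod_inj_aux {e k mb : ℕ} (hke : k ≤ e) {s s' : ℕ} (hs : s < k) (hs' : s' < k)
    (h : (mb + s) % e = (mb + s') % e) : s = s' := by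
  have h2 : s % e = s' % e := Nat.ModEq.add_left_cancel' mb h
  rwa [Nat.mod_eq_of_lt (lt_of_lt_of_le hs hke),
    Nat.mod_eq_of_lt (lt_of_lt_of_le hs' hke)] at h2

lemma Amat_AhA (k d d' e mq mt mb : ℕ) (hk0 : 0 < k) (hke : k ≤ e)
    (he0 : 0 < e) (hed : e ≤ d') (hq : (mq + 1) * k ≤ d) :
    (Amat k d d' e mq mt mb)ᴴ * Amat k d d' e mq mt mb
      = Matrix.diagonal (fun c : Fin d' =>
          if ∃ s, s < k ∧ (c : ℕ) = (mb + s) % e then (1 : ℂ) else 0) := by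
  have hz : ∀ a : ℕ, star (zetaC k ^ a) * zetaC k ^ a = 1 := by
    intro a
    rw [star_pow, star_zetaC, inv_pow, inv_mul_cancel₀ (pow_ne_zero _ (zetaC_ne_zero k))]
  ext c c'
  rw [Matrix.mul_apply]
  have hterm : ∀ r : Fin d, (Amat k d d' e mq mt mb)ᴴ c r * Amat k d d' e mq mt mb r c'
      = (if (r : ℕ) / k = mq ∧ (c : ℕ) = (mb + (r : ℕ) % k) % e
            ∧ (c' : ℕ) = (mb + (r : ℕ) % k) % e then (1 : ℂ) else 0) := by
    intro r
    rw [Matrix.conjTranspose_apply, Amat_apply, Amat_apply]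
    by_cases h1 : (r : ℕ) / k = mq ∧ (c : ℕ) = (mb + (r : ℕ) % k) % e
    · by_cases h2 : (c' : ℕ) = (mb + (r : ℕ) % k) % e
      · rw [if_pos h1, if_pos ⟨h1.1, h2⟩, if_pos ⟨h1.1, h1.2, h2⟩, hz]
      · rw [if_neg (show ¬((r : ℕ) / k = mq ∧ (c' : ℕ) = (mb + (r : ℕ) % k) % e) from
            fun hx => h2 hx.2), mul_zero,
          if_neg (show ¬((r : ℕ) / k = mq ∧ (c : ℕ) = (mb + (r : ℕ) % k) % e
            ∧ (c' : ℕ) = (mb + (r : ℕ) % k) % e) from fun hx => h2 hx.2.2)]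
    · rw [if_neg h1, star_zero, zero_mul, if_neg (by tauto)]
  rw [Finset.sum_congr rfl (fun r _ => hterm r)]
  rw [Fin.sum_univ_eq_sum_range (fun n => if n / k = mq ∧ (c : ℕ) = (mb + n % k) % e
      ∧ (c' : ℕ) = (mb + n % k) % e then (1 : ℂ) else 0) d]
  have hsplit : ∀ n, (if n / k = mq ∧ (c : ℕ) = (mb + n % k) % e
      ∧ (c' : ℕ) = (mb + n % k) % e then (1 : ℂ) else 0)
      = (if n / k = mq then
          (if (c : ℕ) = (mb + n % k) % e ∧ (c' : ℕ) = (mb + n % k) % e then (1 : ℂ) else 0)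
          else 0) := by
    intro n
    by_cases h : n / k = mq <;> simp [h]
  rw [Finset.sum_congr rfl (fun n _ => hsplit n)]
  rw [sum_rows' d k mq hk0 hq]
  have hmodk : ∀ s, s < k → (mq * k + s) % k = s := by
    intro s hs
    rw [Nat.add_comm, Nat.add_mul_mod_self_right, Nat.mod_eq_of_lt hs]
  by_cases hcc : c = c'
  · subst hcc
    rw [Matrix.diagonal_apply_eq]
    by_cases hex : ∃ s, s < k ∧ (c : ℕ) = (mb + s) % e
    · obtain ⟨s₀, hs₀k, hcs₀⟩ := hex
      rw [if_pos ⟨s₀, hs₀k, hcs₀⟩]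
      rw [Finset.sum_eq_single s₀]
      · rw [hmodk s₀ hs₀k, if_pos ⟨hcs₀, hcs₀⟩]
      · intro s hsmem hsne
        simp only [Finset.mem_range] at hsmem
        rw [hmodk s hsmem, if_neg]
        rintro ⟨h1, -⟩
        exact hsne (mod_inj_aux hke hsmem hs₀k (h1.symm.trans hcs₀))
      · intro h
        exact absurd (Finset.mem_range.2 hs₀k) h
    · rw [if_neg hex]
      apply Finset.sum_eq_zero
      intro s hsmem
      simp only [Finset.mem_range] at hsmem
      rw [hmodk s hsmem, if_neg]
      rintro ⟨h1, -⟩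
      exact hex ⟨s, hsmem, h1⟩
  · rw [Matrix.diagonal_apply_ne _ hcc]
    apply Finset.sum_eq_zero
    intro s hsmem
    simp only [Finset.mem_range] at hsmem
    rw [hmodk s hsmem, if_neg]
    rintro ⟨h1, h2⟩
    exact hcc (Fin.ext (h1.trans h2.symm))
open ComplexOrder in
lemma Amat_SV1 (k d d' e mq mt mb : ℕ) (hk0 : 0 < k) (hke : k ≤ e)
    (he0 : 0 < e) (hed : e ≤ d') (hq : (mq + 1) * k ≤ d) (hd'0 : 0 < d') :
    IsSV1 k (Amat k d d' e mq mt mb) := by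
  have hvlt : ∀ s : ℕ, (mb + s) % e < d' := fun s =>
    lt_of_lt_of_le (Nat.mod_lt _ he0) hed
  constructor
  · rw [Amat_AhA k d d' e mq mt mb hk0 hke he0 hed hq, Matrix.diagonal_mul_diagonal]
    have hfun : (fun c : Fin d' =>
        (if ∃ s, s < k ∧ (c : ℕ) = (mb + s) % e then (1 : ℂ) else 0) *
          (if ∃ s, s < k ∧ (c : ℕ) = (mb + s) % e then (1 : ℂ) else 0))
        = fun c : Fin d' => if ∃ s, s < k ∧ (c : ℕ) = (mb + s) % e then (1 : ℂ) else 0 := by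
      funext c
      by_cases h : ∃ s, s < k ∧ (c : ℕ) = (mb + s) % e <;> simp [h]
    rw [hfun]
  · rw [← Matrix.rank_conjTranspose_mul_self,
      Amat_AhA k d d' e mq mt mb hk0 hke he0 hed hq, Matrix.rank_diagonal]
    rw [Fintype.card_subtype]
    have himg : (Finset.univ.filter fun c : Fin d' =>
          (if ∃ s, s < k ∧ (c : ℕ) = (mb + s) % e then (1 : ℂ) else 0) ≠ 0)
        = (Finset.range k).image
            (fun s => (⟨(mb + s) % e, hvlt s⟩ : Fin d')) := by
      ext c
      simp only [Finset.mem_filter, Finset.mem_univ, true_and, Finset.mem_image,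
        Finset.mem_range]
      constructor
      · intro hcne
        by_cases h : ∃ s, s < k ∧ (c : ℕ) = (mb + s) % e
        · obtain ⟨s, hs, hcs⟩ := h
          exact ⟨s, hs, Fin.ext (show (mb + s) % e = (c : ℕ) from hcs.symm)⟩
        · rw [if_neg h] at hcne
          exact absurd rfl hcne
      · rintro ⟨s, hs, rfl⟩
        rw [if_pos ⟨s, hs, rfl⟩]
        exact one_ne_zero
    rw [himg, Finset.card_image_of_injOn, Finset.card_range]
    intro s hs s' hs' hss
    simp only [Finset.mem_coe, Finset.mem_range] at hs hs'
    have h1 : (mb + s) % e = (mb + s') % e := by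
      simpa [Fin.ext_iff] using hss
    exact mod_inj_aux hke hs hs' h1

lemma Amat_inner (k d d' e mq mt mb mq' mt' mb' : ℕ) (hk0 : 0 < k) (hke : k ≤ e)
    (he0 : 0 < e) (hed : e ≤ d') (hd0 : 0 < d) (hd'0 : 0 < d')
    (hq : (mq + 1) * k ≤ d) (hq' : (mq' + 1) * k ≤ d)
    (ht : mt < k) (ht' : mt' < k) (hb : mb < e) (hb' : mb' < e) :
    ((Amat k d d' e mq mt mb)ᴴ * Amat k d d' e mq' mt' mb').trace
      = if mq = mq' ∧ mt = mt' ∧ mb = mb' then (k : ℂ) else 0 := by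
  rw [Amat_trace k d d' e mq mt mb hk0 hd0 hd'0 he0 hed hq]
  have hrow : ∀ s, s < k → (mq * k + s) % d = mq * k + s := by
    intro s hs
    apply Nat.mod_eq_of_lt
    calc mq * k + s < mq * k + k := by omega
    _ = (mq + 1) * k := (Nat.succ_mul mq k).symm
    _ ≤ d := hq
  have hcol : ∀ x, x % e % d' = x % e := fun x =>
    Nat.mod_eq_of_lt (lt_of_lt_of_le (Nat.mod_lt _ he0) hed)
  have hentry : ∀ s, s < k →
      Amat k d d' e mq' mt' mb'
        ⟨(mq * k + s) % d, Nat.mod_lt _ hd0⟩ ⟨(mb + s) % e % d', Nat.mod_lt _ hd'0⟩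
      = if mq = mq' ∧ (mb + s) % e = (mb' + s) % e then zetaC k ^ (s * mt') else 0 := by
    intro s hs
    rw [Amat_apply]
    have h1 : ((⟨(mq * k + s) % d, Nat.mod_lt _ hd0⟩ : Fin d) : ℕ) = mq * k + s := hrow s hs
    have hdivk : (mq * k + s) / k = mq := by
      rw [Nat.add_comm, Nat.add_mul_div_right _ _ hk0, Nat.div_eq_of_lt hs, Nat.zero_add]
    have hmodk : (mq * k + s) % k = s := by
      rw [Nat.add_comm, Nat.add_mul_mod_self_right, Nat.mod_eq_of_lt hs]
    simp only [hrow s hs, hdivk, hmodk, hcol]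
  rw [Finset.sum_congr rfl (fun s hs => by
    rw [hentry s (Finset.mem_range.1 hs)])]
  by_cases hqq : mq = mq'
  · by_cases hbb : mb = mb'
    · subst hqq; subst hbb
      have hc : ∀ s ∈ Finset.range k,
          star (zetaC k ^ (s * mt)) * (if mq = mq ∧ (mb + s) % e = (mb + s) % e
            then zetaC k ^ (s * mt') else 0)
          = star (zetaC k ^ (s * mt)) * zetaC k ^ (s * mt') := by
        intro s _
        rw [if_pos ⟨rfl, rfl⟩]
      rw [Finset.sum_congr rfl hc, key_sum k mt mt' hk0 ht ht']
      simp
    · rw [if_neg (by tauto)]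
      apply Finset.sum_eq_zero
      intro s hs
      rw [if_neg, mul_zero]
      rintro ⟨-, h2⟩
      refine hbb ?_
      have h3 : mb % e = mb' % e :=
        Nat.ModEq.add_right_cancel' s (h2 : (mb + s) % e = (mb' + s) % e)
      rwa [Nat.mod_eq_of_lt hb, Nat.mod_eq_of_lt hb'] at h3
  · rw [if_neg (by tauto)]
    apply Finset.sum_eq_zero
    intro s hs
    rw [if_neg (fun hx => hqq hx.1), mul_zero]
lemma B_vanish (k d d' e : ℕ) (hk0 : 0 < k) (hdvd : k ∣ d) (hke : k ≤ e)
    (hed : e ≤ d') (hd0 : 0 < d) (hd'0 : 0 < d') (he0 : 0 < e)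
    (B : Matrix (Fin d) (Fin d') ℂ)
    (hB : ∀ mq mt mb : ℕ, (mq + 1) * k ≤ d → mt < k → mb < e →
      ((Amat k d d' e mq mt mb)ᴴ * B).trace = 0)
    (r₀ : Fin d) (c₀ : Fin d') (hc₀ : (c₀ : ℕ) < e) : B r₀ c₀ = 0 := by
  set q₀ : ℕ := (r₀ : ℕ) / k with hq₀def
  set s₀ : ℕ := (r₀ : ℕ) % k with hs₀def
  set b₀ : ℕ := ((c₀ : ℕ) + (e - s₀)) % e with hb₀def
  have hs₀ : s₀ < k := Nat.mod_lt _ hk0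
  have hb₀ : b₀ < e := Nat.mod_lt _ he0
  have hq₀ : (q₀ + 1) * k ≤ d := by
    have h1 : q₀ < d / k := Nat.div_lt_div_of_lt_of_dvd hdvd r₀.isLt
    calc (q₀ + 1) * k ≤ (d / k) * k := Nat.mul_le_mul_right k (by omega)
    _ = d := Nat.div_mul_cancel hdvd
  have hvb : (b₀ + s₀) % e = (c₀ : ℕ) := by
    rw [hb₀def, Nat.mod_add_mod]
    have h1 : (c₀ : ℕ) + (e - s₀) + s₀ = (c₀ : ℕ) + e := by
      have : s₀ ≤ e := le_of_lt (lt_of_lt_of_le hs₀ hke)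
      omega
    rw [h1, Nat.add_mod_right, Nat.mod_eq_of_lt hc₀]
  have htr : ∀ τ, τ < k → ∑ s ∈ Finset.range k, star (zetaC k ^ (s * τ)) *
      B ⟨(q₀ * k + s) % d, Nat.mod_lt _ hd0⟩ ⟨(b₀ + s) % e % d', Nat.mod_lt _ hd'0⟩ = 0 := by
    intro τ hτ
    have h := hB q₀ τ b₀ hq₀ hτ hb₀
    rwa [Amat_trace k d d' e q₀ τ b₀ hk0 hd0 hd'0 he0 hed hq₀ B] at h
  have h1 : ∑ s ∈ Finset.range k, (if s = s₀ then (k : ℂ) else 0) *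
      B ⟨(q₀ * k + s) % d, Nat.mod_lt _ hd0⟩ ⟨(b₀ + s) % e % d', Nat.mod_lt _ hd'0⟩
      = (k : ℂ) * B ⟨(q₀ * k + s₀) % d, Nat.mod_lt _ hd0⟩
          ⟨(b₀ + s₀) % e % d', Nat.mod_lt _ hd'0⟩ := by
    simp only [ite_mul, zero_mul]
    rw [Finset.sum_ite_eq' (Finset.range k) s₀ (fun s => (k : ℂ) *
      B ⟨(q₀ * k + s) % d, Nat.mod_lt _ hd0⟩ ⟨(b₀ + s) % e % d', Nat.mod_lt _ hd'0⟩)]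
    rw [if_pos (Finset.mem_range.2 hs₀)]
  have h3 : ∑ s ∈ Finset.range k, (if s = s₀ then (k : ℂ) else 0) *
      B ⟨(q₀ * k + s) % d, Nat.mod_lt _ hd0⟩ ⟨(b₀ + s) % e % d', Nat.mod_lt _ hd'0⟩ = 0 := by
    have hstep : ∀ s ∈ Finset.range k, (if s = s₀ then (k : ℂ) else 0) *
        B ⟨(q₀ * k + s) % d, Nat.mod_lt _ hd0⟩ ⟨(b₀ + s) % e % d', Nat.mod_lt _ hd'0⟩
        = ∑ τ ∈ Finset.range k, zetaC k ^ (τ * s₀) * (star (zetaC k ^ (s * τ)) *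
            B ⟨(q₀ * k + s) % d, Nat.mod_lt _ hd0⟩
              ⟨(b₀ + s) % e % d', Nat.mod_lt _ hd'0⟩) := by
      intro s hs
      rw [← key_sum k s s₀ hk0 (Finset.mem_range.1 hs) hs₀, Finset.sum_mul]
      apply Finset.sum_congr rfl
      intro τ _
      rw [Nat.mul_comm s τ]
      ring
    rw [Finset.sum_congr rfl hstep, Finset.sum_comm]
    apply Finset.sum_eq_zero
    intro τ hτ
    rw [← Finset.mul_sum, htr τ (Finset.mem_range.1 hτ), mul_zero]
  have hmain : (k : ℂ) * B ⟨(q₀ * k + s₀) % d, Nat.mod_lt _ hd0⟩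
      ⟨(b₀ + s₀) % e % d', Nat.mod_lt _ hd'0⟩ = 0 := h1.symm.trans h3
  have hkne : (k : ℂ) ≠ 0 := Nat.cast_ne_zero.2 hk0.ne'
  have hzero := (mul_eq_zero.1 hmain).resolve_left hkne
  have hrow : (⟨(q₀ * k + s₀) % d, Nat.mod_lt _ hd0⟩ : Fin d) = r₀ := by
    apply Fin.ext
    show (q₀ * k + s₀) % d = (r₀ : ℕ)
    have hh : q₀ * k + s₀ = (r₀ : ℕ) := Nat.div_add_mod' (r₀ : ℕ) k
    rw [hh, Nat.mod_eq_of_lt r₀.isLt]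
  have hcol : (⟨(b₀ + s₀) % e % d', Nat.mod_lt _ hd'0⟩ : Fin d') = c₀ := by
    apply Fin.ext
    show (b₀ + s₀) % e % d' = (c₀ : ℕ)
    rw [hvb, Nat.mod_eq_of_lt c₀.isLt]
  rwa [hrow, hcol] at hzero
theorem main_construction (k d d' e : ℕ) (hk2 : 2 ≤ k) (hkd : k ≤ d) (hdvd : k ∣ d)
    (hke : k ≤ e) (hed : e ≤ d') :
    ∃ A : Fin (d * e) → Matrix (Fin d) (Fin d') ℂ,
      (∀ m, IsSV1 k (A m)) ∧
      (∀ m n, ((A m)ᴴ * A n).trace = if m = n then (k : ℂ) else 0) ∧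
      (∀ B : Matrix (Fin d) (Fin d') ℂ, (∀ m, ((A m)ᴴ * B).trace = 0) →
        ∀ (r : Fin d) (c : Fin d'), (c : ℕ) < e → B r c = 0) ∧
      (∀ m (r : Fin d) (c : Fin d'), e ≤ (c : ℕ) → A m r c = 0) := by
  have hk0 : 0 < k := by omega
  have hd0 : 0 < d := by omega
  have he0 : 0 < e := by omega
  have hd'0 : 0 < d' := by omega
  have hke0 : 0 < k * e := Nat.mul_pos hk0 he0
  have hde : d * e = (d / k) * (k * e) := by
    rw [← Nat.mul_assoc, Nat.div_mul_cancel hdvd]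
  have hq : ∀ m : Fin (d * e), ((m : ℕ) / (k * e) + 1) * k ≤ d := by
    intro m
    have h1 : (m : ℕ) / (k * e) < d / k := by
      rw [Nat.div_lt_iff_lt_mul hke0]
      exact lt_of_lt_of_le m.isLt (le_of_eq hde)
    calc ((m : ℕ) / (k * e) + 1) * k ≤ (d / k) * k := Nat.mul_le_mul_right k (by omega)
    _ = d := Nat.div_mul_cancel hdvd
  have ht : ∀ m : Fin (d * e), (m : ℕ) % (k * e) / e < k := by
    intro m
    rw [Nat.div_lt_iff_lt_mul he0]
    exact Nat.mod_lt _ hke0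
  have hb : ∀ m : Fin (d * e), (m : ℕ) % e < e := fun m => Nat.mod_lt _ he0
  refine ⟨fun m => Amat k d d' e ((m : ℕ) / (k * e)) ((m : ℕ) % (k * e) / e) ((m : ℕ) % e),
    ?_, ?_, ?_, ?_⟩
  · intro m
    exact Amat_SV1 k d d' e _ _ _ hk0 hke he0 hed (hq m) hd'0
  · intro m n
    rw [Amat_inner k d d' e _ _ _ _ _ _ hk0 hke he0 hed hd0 hd'0
      (hq m) (hq n) (ht m) (ht n) (hb m) (hb n)]
    apply if_congr _ rfl rfl
    constructor
    · rintro ⟨h1, h2, h3⟩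
      apply Fin.ext
      have hm : (m : ℕ) = k * e * ((m : ℕ) / (k * e)) +
          (e * ((m : ℕ) % (k * e) / e) + (m : ℕ) % e) := by
        conv_lhs => rw [← Nat.div_add_mod (m : ℕ) (k * e)]
        congr 1
        conv_lhs => rw [← Nat.div_add_mod ((m : ℕ) % (k * e)) e]
        rw [Nat.mod_mod_of_dvd _ (dvd_mul_left e k)]
      have hn : (n : ℕ) = k * e * ((n : ℕ) / (k * e)) +
          (e * ((n : ℕ) % (k * e) / e) + (n : ℕ) % e) := by
        conv_lhs => rw [← Nat.div_add_mod (n : ℕ) (k * e)]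
        congr 1
        conv_lhs => rw [← Nat.div_add_mod ((n : ℕ) % (k * e)) e]
        rw [Nat.mod_mod_of_dvd _ (dvd_mul_left e k)]
      rw [hm, hn, h1, h2, h3]
    · rintro rfl
      exact ⟨rfl, rfl, rfl⟩
  · intro B hB r c hc
    refine B_vanish k d d' e hk0 hdvd hke hed hd0 hd'0 he0 B ?_ r c hc
    intro mq mt mb hmq hmt hmb
    have hrem : mb + mt * e < k * e := by
      calc mb + mt * e < e + mt * e := by omega
      _ = (mt + 1) * e := by ring
      _ ≤ k * e := Nat.mul_le_mul_right e (by omega)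
    have hlt : mb + mt * e + mq * (k * e) < d * e := by
      have h1 : mq + 1 ≤ d / k := by
        have := Nat.le_div_iff_mul_le hk0 |>.2 hmq
        exact this
      calc mb + mt * e + mq * (k * e) < k * e + mq * (k * e) := by omega
      _ = (mq + 1) * (k * e) := by ring
      _ ≤ (d / k) * (k * e) := Nat.mul_le_mul_right (k * e) h1
      _ = d * e := hde.symm
    have hdq : (mb + mt * e + mq * (k * e)) / (k * e) = mq := by
      rw [Nat.add_mul_div_right _ _ hke0, Nat.div_eq_of_lt hrem, Nat.zero_add]
    have hdt : (mb + mt * e + mq * (k * e)) % (k * e) / e = mt := by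
      rw [Nat.add_mul_mod_self_right, Nat.mod_eq_of_lt hrem,
        Nat.add_mul_div_right _ _ he0, Nat.div_eq_of_lt hmb, Nat.zero_add]
    have hdb : (mb + mt * e + mq * (k * e)) % e = mb := by
      rw [show mq * (k * e) = mq * k * e from (Nat.mul_assoc mq k e).symm,
        Nat.add_mul_mod_self_right, Nat.add_mul_mod_self_right, Nat.mod_eq_of_lt hmb]
    have h2 : ((Amat k d d' e ((mb + mt * e + mq * (k * e)) / (k * e))
        ((mb + mt * e + mq * (k * e)) % (k * e) / e)
        ((mb + mt * e + mq * (k * e)) % e))ᴴ * B).trace = 0 :=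
      hB ⟨mb + mt * e + mq * (k * e), hlt⟩
    rwa [hdq, hdt, hdb] at h2
  · intro m r c hc
    show Amat k d d' e ((m : ℕ) / (k * e)) ((m : ℕ) % (k * e) / e) ((m : ℕ) % e) r c = 0
    rw [Amat_apply, if_neg]
    rintro ⟨-, h2⟩
    have : (c : ℕ) < e := h2 ▸ Nat.mod_lt _ he0
    omega


/-- Case (1): let `2 ≤ k ≤ d ≤ d'` with `k ∣ d`. For every `i` with
`1 ≤ i ≤ k-1` and `d'-i ≥ k` there is a `d(d'-i)`-number USV1Bk in `M_{d×d'}`,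
consisting of matrices supported on the first `d'-i` columns. -/
theorem case1_SUEBk (k d d' : ℕ) (hk : 2 ≤ k) (hkd : k ≤ d) (hdd : d ≤ d')
    (hdvd : k ∣ d) (i : ℕ) (hi1 : 1 ≤ i) (hi2 : i ≤ k - 1) (hi3 : k ≤ d' - i) :
    ∃ A : Fin (d * (d' - i)) → Matrix (Fin d) (Fin d') ℂ,
      (∀ m, IsSV1 k (A m)) ∧
      (∀ m n, ((A m)ᴴ * A n).trace = if m = n then (k : ℂ) else 0) ∧
      (∀ B : Matrix (Fin d) (Fin d') ℂ,
        (∀ m, ((A m)ᴴ * B).trace = 0) → ¬ IsSV1 k B) ∧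
      (∀ m (r : Fin d) (c : Fin d'), d' - i ≤ (c : ℕ) → A m r c = 0) := by
  obtain ⟨A, h1, h2, h3, h4⟩ :=
    main_construction k d d' (d' - i) hk hkd hdvd hi3 (Nat.sub_le d' i)
  refine ⟨A, h1, h2, ?_, h4⟩
  intro B hB hSV
  have hvan := h3 B hB
  have hid' : i ≤ d' := by omega
  have hjlt : ∀ j : Fin i, (d' - i) + (j : ℕ) < d' := by
    intro j
    have := j.isLt
    omega
  set B₁ : Matrix (Fin d) (Fin i) ℂ :=
    Matrix.of fun r j => B r ⟨(d' - i) + (j : ℕ), hjlt j⟩ with hB₁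
  set E : Matrix (Fin i) (Fin d') ℂ :=
    Matrix.of fun j c => if (c : ℕ) = (d' - i) + (j : ℕ) then 1 else 0 with hE
  have hfact : B = B₁ * E := by
    ext r c
    rw [Matrix.mul_apply]
    by_cases hc : (c : ℕ) < d' - i
    · rw [hvan r c hc]
      symm
      apply Finset.sum_eq_zero
      intro j _
      simp only [hB₁, hE, Matrix.of_apply]
      rw [if_neg (by omega), mul_zero]
    · push_neg at hc
      have hj : (c : ℕ) - (d' - i) < i := by
        have := c.isLt
        omega
      rw [Finset.sum_eq_single (⟨(c : ℕ) - (d' - i), hj⟩ : Fin i)]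
      · simp only [hB₁, hE, Matrix.of_apply]
        rw [if_pos (show (c : ℕ) = (d' - i) + ((c : ℕ) - (d' - i)) by omega), mul_one]
        congr 1
        exact Fin.ext (show (c : ℕ) = (d' - i) + ((c : ℕ) - (d' - i)) by omega)
      · intro j _ hj'
        simp only [hB₁, hE, Matrix.of_apply]
        rw [if_neg, mul_zero]
        intro hcj
        apply hj'
        apply Fin.ext
        show (j : ℕ) = (c : ℕ) - (d' - i)
        omega
      · intro hmem
        exact absurd (Finset.mem_univ _) hmem
  have hrank : B.rank ≤ i := by
    rw [hfact]
    calc (B₁ * E).rank ≤ B₁.rank := Matrix.rank_mul_le_left B₁ E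
    _ ≤ Fintype.card (Fin i) := Matrix.rank_le_card_width B₁
    _ = i := Fintype.card_fin i
  obtain ⟨-, hrk⟩ := hSV
  omega
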